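/- arXiv:2505.14933 — 2 statements merged into one kernel-verified Lean document; each statement's English description precedes it below -/
import Mathlib

section
/- (Theorem 8.2, part 2.) Let β₁ ≥ 0, R* ≥ 0 (the optimal in-distribution risk), π ∈ (0,1], and let ζ ∈ ℝ satisfy ζ ≥ 2.011·√(8β₁R*) + 1.011·√π. Then there exists η ∈ (0,1) such that both (1 − η)²·ζ² − 8β₁R* > 0 and 0.98·η²·ζ² − 8β₁R* > π. Consequently Δ = (1−η)²ζ² − 8β₁R* > 0 and Δ_ζ^η = 0.98η²ζ² − 8β₁R* > π, so the main error δ(T) = max{0, 1 − Δ_ζ^η/π}/(1 − T/M′) equals 0. -/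
set_option maxHeartbeats 1000000 in
/-- Theorem 8.2, part 2: if `ζ ≥ 2.011·√(8β₁R*) + 1.011·√π`, there exists
`η ∈ (0,1)` with `Δ = (1−η)²ζ² − 8β₁R* > 0` and
`Δ_ζ^η = 0.98η²ζ² − 8β₁R* > π`; consequently the main error
`δ(T) = max{0, 1 − Δ_ζ^η/π}/(1 − T/M′)` equals `0`. -/
theorem sal_main_error_zero (β₁ R pi ζ : ℝ) (hβ : 0 ≤ β₁) (hR : 0 ≤ R)
    (hpi : pi ∈ Set.Ioc (0 : ℝ) 1)
    (hζ : 2.011 * Real.sqrt (8 * β₁ * R) + 1.011 * Real.sqrt pi ≤ ζ) :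
    ∃ η ∈ Set.Ioo (0 : ℝ) 1,
      0 < (1 - η) ^ 2 * ζ ^ 2 - 8 * β₁ * R ∧
      pi < 0.98 * η ^ 2 * ζ ^ 2 - 8 * β₁ * R ∧
      ∀ T M' : ℝ, 0 < T → T < M' →
        max 0 (1 - (0.98 * η ^ 2 * ζ ^ 2 - 8 * β₁ * R) / pi) / (1 - T / M') = 0 := by
  obtain ⟨hpi0, hpi1⟩ := hpi
  set s := Real.sqrt (8 * β₁ * R) with hs_def
  set p := Real.sqrt pi with hp_def
  have hA : (0:ℝ) ≤ 8 * β₁ * R := by positivity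
  have hs : 0 ≤ s := Real.sqrt_nonneg _
  have hs2 : s ^ 2 = 8 * β₁ * R := Real.sq_sqrt hA
  have hp : 0 < p := Real.sqrt_pos.mpr hpi0
  have hp2 : p ^ 2 = pi := Real.sq_sqrt hpi0.le
  have hζpos : 0 < ζ := by nlinarith
  set η : ℝ := 1 - (s + 0.0005 * p) / ζ with hη_def
  have hnum : 0 < s + 0.0005 * p := by nlinarith
  have hlt : s + 0.0005 * p < ζ := by nlinarith
  have hηζ : η * ζ = ζ - (s + 0.0005 * p) := by
    rw [hη_def, sub_mul, div_mul_cancel₀ _ hζpos.ne']; ring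
  have h1ηζ : (1 - η) * ζ = s + 0.0005 * p := by
    rw [hη_def, sub_sub_cancel, div_mul_cancel₀ _ hζpos.ne']
  have hη1 : η < 1 := by
    have : 0 < (s + 0.0005 * p) / ζ := div_pos hnum hζpos
    simp only [hη_def]; linarith
  have hη0 : 0 < η := by
    have : (s + 0.0005 * p) / ζ < 1 := (div_lt_one hζpos).mpr hlt
    simp only [hη_def]; linarith
  refine ⟨η, ⟨hη0, hη1⟩, ?_, ?_, ?_⟩
  · have : (1 - η) ^ 2 * ζ ^ 2 = ((1 - η) * ζ) ^ 2 := by ring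
    rw [this, h1ηζ]
    nlinarith
  · have h1 : 0.98 * η ^ 2 * ζ ^ 2 = 0.98 * (η * ζ) ^ 2 := by ring
    have h2 : 1.011 * s + 1.0105 * p ≤ η * ζ := by rw [hηζ]; nlinarith
    have h3 : 0 ≤ 1.011 * s + 1.0105 * p := by nlinarith
    have h4 : (1.011 * s + 1.0105 * p) ^ 2 ≤ (η * ζ) ^ 2 := pow_le_pow_left₀ h3 h2 2
    rw [h1]; nlinarith [mul_nonneg hs hp.le]
  · intro T M' hT hTM
    have hΔ : pi < 0.98 * η ^ 2 * ζ ^ 2 - 8 * β₁ * R := by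
      have h1 : 0.98 * η ^ 2 * ζ ^ 2 = 0.98 * (η * ζ) ^ 2 := by ring
      have h2 : 1.011 * s + 1.0105 * p ≤ η * ζ := by rw [hηζ]; nlinarith
      have h3 : 0 ≤ 1.011 * s + 1.0105 * p := by nlinarith
      have h4 : (1.011 * s + 1.0105 * p) ^ 2 ≤ (η * ζ) ^ 2 := pow_le_pow_left₀ h3 h2 2
      rw [h1]; nlinarith [mul_nonneg hs hp.le]
    have hle : 1 - (0.98 * η ^ 2 * ζ ^ 2 - 8 * β₁ * R) / pi ≤ 0 := by
      have : 1 < (0.98 * η ^ 2 * ζ ^ 2 - 8 * β₁ * R) / pi :=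
        (one_lt_div hpi0).mpr hΔ
      linarith
    rw [max_eq_left hle, zero_div]
end

section
/- (Lemma Error-2, first inequality; deterministic form.) Let α be a type, L ≥ 0, and f : α → ℝ with 0 ≤ f(x) ≤ L for all x. Let O₋, O₊, I₋ be pairwise disjoint finite subsets of α, and set S_T = O₋ ∪ I₋ and S_out = O₋ ∪ O₊, assuming both S_T and S_out are nonempty. Let Δ ∈ [0,1) and suppose (1 − Δ)·|S_out| ≤ |S_T|. Then the difference of averages satisfies (1/|S_T|) Σ_{x∈S_T} f(x) − (1/|S_out|) Σ_{x∈S_out} f(x) ≤ L·Δ/(1 − Δ) + L·|I₋| / ((1 − Δ)·|S_out|). -/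
/-- Lemma Error-2, first inequality (deterministic form): for a function `f`
with values in `[0, L]`, pairwise disjoint finite sets `O₋, O₊, I₋`, with
`S_T = O₋ ∪ I₋` and `S_out = O₋ ∪ O₊` nonempty, and `(1 − Δ)·|S_out| ≤ |S_T|`
for some `Δ ∈ [0,1)`, the difference of the averages of `f` over `S_T` and
over `S_out` is at most `LΔ/(1 − Δ) + L|I₋|/((1 − Δ)|S_out|)`. -/
theorem sal_error2 {α : Type*} [DecidableEq α] (L : ℝ) (hL : 0 ≤ L)
    (f : α → ℝ) (hf : ∀ x, 0 ≤ f x ∧ f x ≤ L)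
    (Om Op Im : Finset α)
    (hd1 : Disjoint Om Op) (hd2 : Disjoint Om Im) (hd3 : Disjoint Op Im)
    (hT : (Om ∪ Im).Nonempty) (hout : (Om ∪ Op).Nonempty)
    (Δ : ℝ) (hΔ : Δ ∈ Set.Ico (0 : ℝ) 1)
    (hcard : (1 - Δ) * ((Om ∪ Op).card : ℝ) ≤ ((Om ∪ Im).card : ℝ)) :
    (1 / ((Om ∪ Im).card : ℝ)) * ∑ x ∈ Om ∪ Im, f x
        - (1 / ((Om ∪ Op).card : ℝ)) * ∑ x ∈ Om ∪ Op, f x ≤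
      L * Δ / (1 - Δ) + L * (Im.card : ℝ) / ((1 - Δ) * ((Om ∪ Op).card : ℝ)) := by
  obtain ⟨hΔ0, hΔ1⟩ := hΔ
  have h1Δ : (0:ℝ) < 1 - Δ := by linarith
  set a : ℝ := ((Om ∪ Im).card : ℝ) with ha
  set b : ℝ := ((Om ∪ Op).card : ℝ) with hb
  have ha0 : (0:ℝ) < a := Nat.cast_pos.mpr (Finset.card_pos.mpr hT)
  have hb0 : (0:ℝ) < b := Nat.cast_pos.mpr (Finset.card_pos.mpr hout)
  set S : ℝ := ∑ x ∈ Om, f x with hS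
  set SI : ℝ := ∑ x ∈ Im, f x with hSI
  set SO : ℝ := ∑ x ∈ Op, f x with hSO
  have hsum1 : ∑ x ∈ Om ∪ Im, f x = S + SI := Finset.sum_union hd2
  have hsum2 : ∑ x ∈ Om ∪ Op, f x = S + SO := Finset.sum_union hd1
  have hS0 : 0 ≤ S := Finset.sum_nonneg fun x _ => (hf x).1
  have hSO0 : 0 ≤ SO := Finset.sum_nonneg fun x _ => (hf x).1
  set m : ℝ := (Im.card : ℝ) with hm
  have hm0 : (0:ℝ) ≤ m := by positivity
  have hSb : S ≤ L * b := by
    have h1 : S ≤ L * (Om.card : ℝ) := by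
      calc S ≤ ∑ x ∈ Om, L := Finset.sum_le_sum fun x _ => (hf x).2
        _ = L * (Om.card : ℝ) := by rw [Finset.sum_const, nsmul_eq_mul, mul_comm]
    have h2 : ((Om.card : ℕ) : ℝ) ≤ b :=
      Nat.cast_le.mpr (Finset.card_le_card Finset.subset_union_left)
    nlinarith
  have hSIm : SI ≤ L * m := by
    calc SI ≤ ∑ x ∈ Im, L := Finset.sum_le_sum fun x _ => (hf x).2
      _ = L * m := by rw [Finset.sum_const, nsmul_eq_mul, mul_comm]
  rw [hsum1, hsum2]
  have step1 : (1 / a) * (S + SI) - (1 / b) * (S + SO) ≤ (S + L * m) / a - S / b := by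
    have e1 : (1 / a) * (S + SI) = (S + SI) / a := by ring
    have e2 : (1 / b) * (S + SO) = (S + SO) / b := by ring
    rw [e1, e2]
    have h1 : (S + SI) / a ≤ (S + L * m) / a := by gcongr
    have h2 : S / b ≤ (S + SO) / b := by gcongr <;> linarith
    linarith
  have step2 : (S + L * m) / a ≤ (S + L * m) / ((1 - Δ) * b) := by
    gcongr
  have step3 : (S + L * m) / ((1 - Δ) * b) - S / b ≤
      L * Δ / (1 - Δ) + L * m / ((1 - Δ) * b) := by
    have e1 : (S + L * m) / ((1 - Δ) * b) - S / b = (Δ * S + L * m) / ((1 - Δ) * b) := by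
      field_simp
      ring
    have e2 : L * Δ / (1 - Δ) + L * m / ((1 - Δ) * b) = (L * Δ * b + L * m) / ((1 - Δ) * b) := by
      field_simp
    rw [e1, e2]
    gcongr ?_ / _
    nlinarith [mul_le_mul_of_nonneg_left hSb hΔ0]
  linarith
end
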